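/- For k = 0,…,⌈log₂(1/γ)⌉−1 let V_k(n,p) = ⋃ {Γ^δ_{kjn} + Γ^δ_{lip} : l ≤ k, j ∈ I_k, i ∈ I_l}. Then for every ξ ∈ ℝ³ and all admissible n, p, the number of indices k with ξ ∈ V_k(n,p) is at most 3. -/

import Mathlib

open MeasureTheory Set
open scoped FourierTransform ENNReal Pointwise

noncomputable section

/-- `γ = δ^{1/m}`. -/
def gam (m : ℕ) (δ : ℝ) : ℝ := δ ^ ((1 : ℝ) / m)

/-- Number of dyadic blocks: `⌈log₂(1/γ)⌉`. -/
def Kmax (m : ℕ) (δ : ℝ) : ℕ := ⌈Real.logb 2 (1 / gam m δ)⌉₊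

/-- Size `⌈2^{km/2}⌉` of the index set `I_k`. -/
def Jmax (m k : ℕ) : ℕ := ⌈(2 : ℝ) ^ ((k * m : ℝ) / 2)⌉₊

/-- `γ_k = 2^{k(1-m/2)} γ`. -/
def gamk (m : ℕ) (δ : ℝ) (k : ℕ) : ℝ := 2 ^ ((k : ℝ) * (1 - (m : ℝ) / 2)) * gam m δ

/-- `x_{kj} = (2^k - 1)γ + j γ_k` (allowing negative `j` for shifted boxes). -/
def xkj (m : ℕ) (δ : ℝ) (k : ℕ) (j : ℤ) : ℝ :=
  ((2 : ℝ) ^ k - 1) * gam m δ + (j : ℝ) * gamk m δ k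

/-- The piece `Γ^δ_{kjn}` of the decomposition of the thickened cone. -/
def GammaSet (m : ℕ) (Φ : ℝ → ℝ) (δ β : ℝ) (k : ℕ) (j n : ℤ) :
    Set (EuclideanSpace ℝ (Fin 3)) :=
  {v | (n : ℝ) * β ≤ v 2 ∧ v 2 ≤ ((n : ℝ) + 1) * β ∧
       Φ (v 0 / v 2) ≤ v 1 / v 2 ∧ v 1 / v 2 ≤ Φ (v 0 / v 2) + δ ∧
       xkj m δ k j ≤ v 0 ∧ v 0 < xkj m δ k (j + 1)}

/-- Admissibility of a multi-index `(k,j,n)`, where `β = 1/N`. -/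
def idxOK (m : ℕ) (δ : ℝ) (N : ℕ) (k j n : ℕ) : Prop :=
  k < Kmax m δ ∧ j < Jmax m k ∧ N ≤ n ∧ n ≤ 2 * N - 1

/-- The finite set of admissible multi-indices `α = (k,j,n)`. -/
def idxFinset (m : ℕ) (δ : ℝ) (N : ℕ) : Finset (ℕ × ℕ × ℕ) :=
  (Finset.range (Kmax m δ) ×ˢ Finset.range (Jmax m (Kmax m δ)) ×ˢ
      Finset.Icc N (2 * N - 1)).filter fun t => t.2.1 < Jmax m t.1

/-- The structural hypotheses on the finite type model curve `Φ`. -/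
def PhiHyp (m : ℕ) (Φ : ℝ → ℝ) : Prop :=
  (∃ χ χ₁ χ₂ : ℝ → ℝ,
    ContDiffOn ℝ 2 χ (Icc 0 1) ∧ ContDiffOn ℝ 1 χ₁ (Icc 0 1) ∧
    ContinuousOn χ₂ (Icc 0 1) ∧
    ∀ x ∈ Icc (0:ℝ) 1, 0 < χ x ∧ 0 < χ₁ x ∧ 0 < χ₂ x ∧
      Φ x = x ^ m * χ x ∧ deriv Φ x = x ^ (m - 1) * χ₁ x ∧
      deriv (deriv Φ) x = x ^ (m - 2) * χ₂ x) ∧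
  ∀ k ≤ m, ∀ x ∈ Ioc (0:ℝ) 1, 0 < iteratedDeriv k Φ x

/-- The bump function `φ_{kjn}` adapted to `Γ^δ_{kjn}`. -/
def phiBump (m : ℕ) (Φ η : ℝ → ℝ) (δ β : ℝ) (α : ℕ × ℕ × ℕ)
    (v : EuclideanSpace ℝ (Fin 3)) : ℝ :=
  η ((v 0 - xkj m δ α.1 (α.2.1 : ℤ)) / gamk m δ α.1) *
    η ((v 1 - v 2 * Φ (v 0 / v 2)) / δ) * η ((v 2 - (α.2.2 : ℝ) * β) / β)

/-- Hypotheses on the bump profile `η`: smooth, compactly supported, and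
`χ_{[-1,1]} ≤ η ≤ χ_{[-5/4,5/4]}`. -/
def EtaHyp (η : ℝ → ℝ) : Prop :=
  ContDiff ℝ (⊤ : ℕ∞) η ∧ HasCompactSupport η ∧
    ∀ x : ℝ, indicator (Icc (-1 : ℝ) 1) (fun _ => (1:ℝ)) x ≤ η x ∧
      η x ≤ indicator (Icc (-5/4 : ℝ) (5/4)) (fun _ => (1:ℝ)) x

/-- The enlarged set `G^δ_{kjn}`, a union of shifted neighbours of `Γ^δ_{kjn}`. -/
def Gset (m : ℕ) (Φ : ℝ → ℝ) (δ β : ℝ) (k : ℕ) (j n : ℤ) :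
    Set (EuclideanSpace ℝ (Fin 3)) :=
  ⋃ u ∈ ({-1, 0, 1} : Set ℤ), ⋃ v ∈ ({-1, 0, 1} : Set ℤ), ⋃ w ∈ ({-1, 0, 1} : Set ℤ),
    (fun q => (EuclideanSpace.equiv (Fin 3) ℝ).symm ![0, (v : ℝ) * δ, 0] + q) ''
      GammaSet m Φ δ β k (j + u) (n + w)

/-- The Lorentz `L^{p,1}` quasinorm, via the distribution function. -/
def lorentzNorm (p : ℝ) (f : EuclideanSpace ℝ (Fin 3) → ℝ) : ℝ≥0∞ :=
  ∫⁻ t in Ioi (0 : ℝ), (volume {x | t < |f x|}) ^ (1 / p)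

end

/-- The union `V_k(n,p) = ⋃ {Γ^δ_{kjn} + Γ^δ_{lip} : l ≤ k, j ∈ I_k, i ∈ I_l}`. -/
noncomputable def Vset (m : ℕ) (Φ : ℝ → ℝ) (δ β : ℝ) (k n p : ℕ) :
    Set (EuclideanSpace ℝ (Fin 3)) :=
  ⋃ l ∈ Finset.range (k + 1), ⋃ j ∈ Finset.range (Jmax m k), ⋃ i ∈ Finset.range (Jmax m l),
    (GammaSet m Φ δ β k (j : ℤ) (n : ℤ) + GammaSet m Φ δ β l (i : ℤ) (p : ℤ))

private lemma gam_pos {m : ℕ} {δ : ℝ} (hδ : 0 < δ) : 0 < gam m δ :=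
  Real.rpow_pos_of_pos hδ _

private lemma gamk_pos {m : ℕ} {δ : ℝ} (hδ : 0 < δ) (k : ℕ) : 0 < gamk m δ k :=
  mul_pos (Real.rpow_pos_of_pos two_pos _) (gam_pos hδ)

private lemma xkj_lower {m : ℕ} {δ : ℝ} (hδ : 0 < δ) (k : ℕ) (j : ℤ) (hj : 0 ≤ j) :
    ((2:ℝ)^k - 1) * gam m δ ≤ xkj m δ k j := by
  unfold xkj
  have h1 : (0:ℝ) ≤ (j:ℝ) := by exact_mod_cast hj
  nlinarith [gamk_pos (m := m) hδ k]

private lemma jmax_mul {m : ℕ} (hm : 3 ≤ m) (k : ℕ) :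
    (Jmax m k : ℝ) * (2:ℝ) ^ ((k:ℝ) * (1 - (m:ℝ)/2)) ≤ 2^k + 1 := by
  have hceil : (Jmax m k : ℝ) ≤ (2:ℝ) ^ (((k:ℝ)*(m:ℝ))/2) + 1 := by
    have := Nat.ceil_lt_add_one (R := ℝ) (a := (2:ℝ) ^ (((k*m:ℕ):ℝ)/2)) (by positivity)
    unfold Jmax
    push_cast at this ⊢
    linarith
  have hpos : (0:ℝ) < (2:ℝ) ^ ((k:ℝ) * (1 - (m:ℝ)/2)) := Real.rpow_pos_of_pos two_pos _
  have hle1 : (2:ℝ) ^ ((k:ℝ) * (1 - (m:ℝ)/2)) ≤ 1 := by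
    apply Real.rpow_le_one_of_one_le_of_nonpos one_le_two
    have h3 : (3:ℝ) ≤ (m:ℝ) := by exact_mod_cast hm
    have hk : (0:ℝ) ≤ (k:ℝ) := Nat.cast_nonneg k
    nlinarith
  have hprod : (2:ℝ) ^ (((k:ℝ)*(m:ℝ))/2) * (2:ℝ) ^ ((k:ℝ) * (1 - (m:ℝ)/2)) = 2^k := by
    rw [← Real.rpow_add two_pos, ← Real.rpow_natCast 2 k]
    ring_nf
  nlinarith [Nat.cast_nonneg (α := ℝ) (Jmax m k)]

private lemma xkj_upper {m : ℕ} (hm : 3 ≤ m) {δ : ℝ} (hδ : 0 < δ) (k : ℕ) (j : ℤ)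
    (hj : (j:ℝ) ≤ Jmax m k) : xkj m δ k j ≤ 2^(k+1) * gam m δ := by
  unfold xkj gamk
  have hγ := gam_pos (m := m) hδ
  have hpos : (0:ℝ) < (2:ℝ) ^ ((k:ℝ) * (1 - (m:ℝ)/2)) := Real.rpow_pos_of_pos two_pos _
  have h2 : (j:ℝ) * (2:ℝ) ^ ((k:ℝ) * (1 - (m:ℝ)/2)) ≤ 2^k + 1 :=
    (mul_le_mul_of_nonneg_right hj hpos.le).trans (jmax_mul hm k)
  have h3 : ((2:ℝ)^k - 1) + ((2:ℝ)^k + 1) = 2^(k+1) := by ring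
  nlinarith

/-- If `ξ ∈ V_k(n,p)` then the first coordinate of `ξ` lies in `[(2^k-1)γ, 2^{k+2}γ)`. -/
private lemma vset_coord {m : ℕ} (hm : 3 ≤ m) {Φ : ℝ → ℝ} {δ β : ℝ} (hδ : 0 < δ)
    {ξ : EuclideanSpace ℝ (Fin 3)} {k n p : ℕ} (h : ξ ∈ Vset m Φ δ β k n p) :
    ((2:ℝ)^k - 1) * gam m δ ≤ ξ 0 ∧ ξ 0 < 2^(k+2) * gam m δ := by
  simp only [Vset, Set.mem_iUnion, Finset.mem_range, exists_prop] at h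
  obtain ⟨l, hl, j, hj, i, hi, hmem⟩ := h
  rw [Set.mem_add] at hmem
  obtain ⟨a, ha, b, hb, hab⟩ := hmem
  have hξ0 : ξ 0 = a 0 + b 0 := by rw [← hab]; rfl
  have hγ := gam_pos (m := m) hδ
  obtain ⟨-, -, -, -, ha5, ha6⟩ := ha
  obtain ⟨-, -, -, -, hb5, hb6⟩ := hb
  have hla : ((2:ℝ)^k - 1) * gam m δ ≤ a 0 :=
    le_trans (xkj_lower hδ k j (by positivity)) ha5
  have hlb : (0:ℝ) ≤ b 0 := by
    refine le_trans ?_ (le_trans (xkj_lower hδ l i (by positivity)) hb5)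
    have : (1:ℝ) ≤ 2^l := one_le_pow₀ one_le_two
    nlinarith
  have hua : a 0 < 2^(k+1) * gam m δ := by
    refine lt_of_lt_of_le ha6 (xkj_upper hm hδ k (j+1) ?_)
    push_cast; exact_mod_cast by push_cast; linarith [show (j:ℝ) + 1 ≤ Jmax m k by exact_mod_cast hj]
  have hub : b 0 < 2^(k+1) * gam m δ := by
    have := lt_of_lt_of_le hb6 (xkj_upper hm hδ l (i+1) (by
      push_cast; linarith [show (i:ℝ) + 1 ≤ Jmax m l by exact_mod_cast hi]))
    refine lt_of_lt_of_le this ?_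
    have : (2:ℝ)^(l+1) ≤ 2^(k+1) := pow_le_pow_right₀ one_le_two (by omega)
    nlinarith
  constructor
  · rw [hξ0]; linarith
  · rw [hξ0]
    have : (2:ℝ)^(k+1) + 2^(k+1) = 2^(k+2) := by ring
    nlinarith

/-- Dyadic overlap: for every `ξ ∈ ℝ³` and admissible `n, p`, the number of indices `k`
with `ξ ∈ V_k(n,p)` is at most `3`. -/
theorem statement8 (m : ℕ) (hm : 3 ≤ m) (Φ : ℝ → ℝ) (hΦ : PhiHyp m Φ)
    (δ : ℝ) (hδ0 : 0 < δ) (hδ1 : δ < 1) (N : ℕ) (hN : 0 < N) (hβδ : ((N : ℝ))⁻¹ < δ)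
    (ξ : EuclideanSpace ℝ (Fin 3)) (n p : ℕ)
    (hn : N ≤ n ∧ n ≤ 2 * N - 1) (hp : N ≤ p ∧ p ≤ 2 * N - 1) :
    {k : ℕ | k < Kmax m δ ∧ ξ ∈ Vset m Φ δ ((N : ℝ))⁻¹ k n p}.Finite ∧
      {k : ℕ | k < Kmax m δ ∧ ξ ∈ Vset m Φ δ ((N : ℝ))⁻¹ k n p}.ncard ≤ 3 := by
  set S : Set ℕ := {k : ℕ | k < Kmax m δ ∧ ξ ∈ Vset m Φ δ ((N : ℝ))⁻¹ k n p} with hS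
  rcases S.eq_empty_or_nonempty with he | hne
  · rw [he]; exact ⟨Set.finite_empty, by simp⟩
  have hγ := gam_pos (m := m) hδ0
  set k₀ := sInf S with hk₀
  have hk₀S : k₀ ∈ S := Nat.sInf_mem hne
  have hsub : S ⊆ {k₀, k₀ + 1, k₀ + 2} := by
    intro k hk
    have hle : k₀ ≤ k := Nat.sInf_le hk
    have h1 := vset_coord hm hδ0 hk.2
    have h2 := vset_coord hm hδ0 hk₀S.2
    have hlt : ((2:ℝ)^k - 1) * gam m δ < 2^(k₀+2) * gam m δ := lt_of_le_of_lt h1.1 h2.2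
    have hlt2 : (2:ℝ)^k - 1 < 2^(k₀+2) := lt_of_mul_lt_mul_right (by linarith [hlt]) hγ.le
    have hlt3 : (2:ℕ)^k < 2^(k₀+2) + 1 := by
      have hc : ((2:ℕ)^k : ℝ) < ((2^(k₀+2) + 1 : ℕ) : ℝ) := by push_cast; linarith
      exact_mod_cast hc
    have : 2^k ≤ 2^(k₀+2) := by omega
    have hk2 : k ≤ k₀ + 2 := (Nat.pow_le_pow_iff_right one_lt_two).mp this
    simp only [Set.mem_insert_iff, Set.mem_singleton_iff]
    omega
  have hfin : S.Finite := Set.Finite.subset (Set.toFinite _) hsub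
  refine ⟨hfin, ?_⟩
  calc S.ncard ≤ ({k₀, k₀ + 1, k₀ + 2} : Set ℕ).ncard :=
        Set.ncard_le_ncard hsub (Set.toFinite _)
    _ ≤ 3 := by
        refine le_trans (Set.ncard_insert_le _ _) ?_
        have h2 := Set.ncard_insert_le (k₀+1) ({k₀+2} : Set ℕ)
        have h3 : ({k₀+2} : Set ℕ).ncard = 1 := Set.ncard_singleton _
        omega
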